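/- arXiv:2211.00954 — 2 statements merged into one kernel-verified Lean document; each statement's English description precedes it below -/
import Mathlib

section
/- Let K₁ and K₂ be self-similar sets as in the context, with A₁ ≥ 0 and A₂ ≥ 0. If there exists a point (x₀,y₀) ∈ K₁ × K₂ such that for every 1 ≤ i ≤ p−1 and every 1 ≤ j ≤ q−1, s_min·(B₂ − A₂)·x₀ + (φ_i(B₁) − φ_{i+1}(A₁))·y₀ > 0 and s_min·(B₁ − A₁)·y₀ + (ψ_j(B₂) − ψ_{j+1}(A₂))·x₀ > 0, then the product set K₁·K₂ = {x·y : x ∈ K₁, y ∈ K₂} has nonempty interior in ℝ. -/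
open Set Filter Topology
open scoped Pointwise

/-!
Follow pairs of cylinders `f K₁ ⊆ K₁`, `g K₂ ⊆ K₂` (`f x = c x + d`, `g y = e y + h`) with
comparable ratios, `s c ≤ e` and `s e ≤ c`, whose box `f [A₁, B₁] × g [A₂, B₂]` stays in a
neighbourhood of `(x₀, y₀)` on which the hypotheses still hold. Splitting the cylinder with the
larger ratio, say `f`, into the `f ∘ φ_k` cuts `[f A₁ · g A₂, f B₁ · g B₂]` into the intervals
`[f (φ_k A₁) · g A₂, f (φ_k B₁) · g B₂]`, and consecutive ones overlap: the hypothesis at the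
corner `(f A₁, g A₂)` bounds the gap `c (φ_{k+1} A₁ - φ_k B₁) g A₂` by
`s c (B₂ - A₂) f A₁ ≤ e (B₂ - A₂) f A₁`. So every point of the first interval lies in the intervals
of a sequence of pairs with `c + e → 0`, whose lower endpoints lie in the compact set `K₁ K₂` at
distance `O(c + e)` from it.
-/

theorem Fin.monotone_of_le_add_one {α : Type*} [Preorder α] {m : ℕ} {g : Fin m → α}
    (h : ∀ k : Fin m, ∀ hk : (k : ℕ) + 1 < m, g k ≤ g ⟨k + 1, hk⟩) : Monotone g := by
  cases m with
  | zero => exact fun i => i.elim0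
  | succ n => exact Fin.monotone_iff_le_succ.2 fun k => h k.castSucc (by simp)

theorem exists_mem_Icc_of_chain {α : Type*} [LinearOrder α] {m : ℕ} [NeZero m]
    {lo hi : Fin m → α} (hchain : ∀ k : Fin m, ∀ hk : (k : ℕ) + 1 < m, lo ⟨k + 1, hk⟩ ≤ hi k)
    {t : α} (hlo : lo 0 ≤ t) (hhi : ∃ j, t ≤ hi j) : ∃ k, t ∈ Icc (lo k) (hi k) := by
  obtain ⟨k, hk, hmin⟩ := wellFounded_lt.has_min {j | t ≤ hi j} hhi
  refine ⟨k, ?_, hk⟩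
  rcases k with ⟨_ | k, hk'⟩
  · exact hlo
  · calc lo ⟨k + 1, hk'⟩ ≤ hi ⟨k, by omega⟩ := hchain ⟨k, by omega⟩ hk'
      _ ≤ t := le_of_not_ge fun h => hmin _ h (Fin.mk_lt_mk.2 k.lt_succ_self)

theorem IsClosed.subset_of_refine {α β : Type*} [PseudoMetricSpace α] {S : Set α}
    (hS : IsClosed S) {P : β → Prop} {J : β → Set α} {size : β → ℝ} {θ C : ℝ}
    (hθ₀ : 0 ≤ θ) (hθ₁ : θ < 1) (hC : 0 ≤ C)
    (hrefine : ∀ b, P b → ∀ t ∈ J b, ∃ b', P b' ∧ t ∈ J b' ∧ size b' ≤ θ * size b)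
    (hnear : ∀ b, P b → ∀ t ∈ J b, ∃ w ∈ S, dist t w ≤ C * size b)
    {b₀ : β} (hb₀ : P b₀) : J b₀ ⊆ S := by
  intro t ht
  have hiter : ∀ n : ℕ, ∃ b, P b ∧ t ∈ J b ∧ size b ≤ θ ^ n * size b₀ := by
    intro n
    induction n with
    | zero => exact ⟨b₀, hb₀, ht, by simp⟩
    | succ n ih =>
      obtain ⟨b, hb, htb, hsize⟩ := ih
      obtain ⟨b', hb', htb', hsize'⟩ := hrefine b hb t htb
      refine ⟨b', hb', htb', hsize'.trans ?_⟩
      rw [pow_succ', mul_assoc]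
      exact mul_le_mul_of_nonneg_left hsize hθ₀
  have hw : ∀ n : ℕ, ∃ w ∈ S, dist t w ≤ C * (θ ^ n * size b₀) := by
    intro n
    obtain ⟨b, hb, htb, hsize⟩ := hiter n
    obtain ⟨w, hwS, hdist⟩ := hnear b hb t htb
    exact ⟨w, hwS, hdist.trans (mul_le_mul_of_nonneg_left hsize hC)⟩
  choose w hwS hwd using hw
  refine hS.mem_of_tendsto (tendsto_iff_dist_tendsto_zero.2 ?_) (.of_forall (f := atTop) hwS)
  refine squeeze_zero (fun n => dist_nonneg) (fun n => (dist_comm _ _).trans_le (hwd n)) ?_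
  simpa using ((tendsto_pow_atTop_nhds_zero_of_lt_one hθ₀ hθ₁).mul_const (size b₀)).const_mul C

section SelfSimilar

variable {ι : Type*} {r a : ι → ℝ} {K : Set ℝ} {A B : ℝ}

theorem mapsTo_of_eq_iUnion (hK : K = ⋃ i, (fun x => r i * x + a i) '' K) (i : ι) :
    MapsTo (fun x => r i * x + a i) K K := by
  intro x hx
  rw [hK]
  exact mem_iUnion.2 ⟨i, x, hx, rfl⟩

theorem exists_apply_eq_of_isGreatest (hK : K = ⋃ i, (fun x => r i * x + a i) '' K)
    (hr : ∀ i, 0 ≤ r i) (hB : IsGreatest K B) : ∃ i, r i * B + a i = B := by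
  have hBmem := hB.1
  rw [hK] at hBmem
  obtain ⟨i, x, hx, hxB⟩ := mem_iUnion.1 hBmem
  refine ⟨i, le_antisymm (hB.2 (mapsTo_of_eq_iUnion hK i hB.1)) ?_⟩
  calc B = r i * x + a i := hxB.symm
    _ ≤ r i * B + a i := by gcongr; exacts [hr i, hB.2 hx]

theorem exists_apply_eq_of_isLeast (hK : K = ⋃ i, (fun x => r i * x + a i) '' K)
    (hr : ∀ i, 0 ≤ r i) (hA : IsLeast K A) : ∃ i, r i * A + a i = A := by
  have hAmem := hA.1
  rw [hK] at hAmem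
  obtain ⟨i, x, hx, hxA⟩ := mem_iUnion.1 hAmem
  refine ⟨i, le_antisymm ?_ (hA.2 (mapsTo_of_eq_iUnion hK i hA.1))⟩
  calc r i * A + a i ≤ r i * x + a i := by gcongr; exacts [hr i, hA.2 hx]
    _ = A := hxA

theorem MapsTo.affine_comp {c d r a : ℝ} (hf : MapsTo (fun x => c * x + d) K K)
    (hg : MapsTo (fun x => r * x + a) K K) :
    MapsTo (fun x => c * r * x + (c * a + d)) K K := by
  convert hf.comp hg using 1
  funext x
  simp only [Function.comp_apply]
  ring

theorem affine_mem_Icc {c d x : ℝ} (hc : 0 ≤ c) (hx : x ∈ Icc A B) :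
    c * x + d ∈ Icc (c * A + d) (c * B + d) :=
  ⟨by gcongr; exact hx.1, by gcongr; exact hx.2⟩

theorem exists_cylinder_ratio_mem_Icc (hK : K = ⋃ i, (fun x => r i * x + a i) '' K)
    (hr : ∀ i, 0 < r i) {s θ : ℝ} (hs : 0 ≤ s) (hsr : ∀ i, s ≤ r i) (hrθ : ∀ i, r i ≤ θ)
    (hθ : θ < 1) {x₀ : ℝ} (hx₀ : x₀ ∈ K) {w : ℝ} (hw₀ : 0 < w) (hw₁ : w < 1) :
    ∃ c d, 0 < c ∧ MapsTo (fun x => c * x + d) K K ∧ x₀ ∈ (fun x => c * x + d) '' K ∧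
      c ∈ Icc (s * w) w := by
  -- Descend along an address of `x₀`, stopping once the ratio is at most `w`; as each step
  -- multiplies it by some `r i ≥ s`, it is then at least `s * w`.
  have hdescend : ∀ n : ℕ, ∃ c d, 0 < c ∧ MapsTo (fun x => c * x + d) K K ∧
      x₀ ∈ (fun x => c * x + d) '' K ∧ (c ∈ Icc (s * w) w ∨ w < c ∧ c ≤ θ ^ n) := by
    intro n
    induction n with
    | zero =>
      exact ⟨1, 0, one_pos, fun x hx => by simpa using hx, ⟨x₀, hx₀, by ring⟩,
        Or.inr ⟨hw₁, by simp⟩⟩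
    | succ n ih =>
      obtain ⟨c, d, hc, hf, ⟨x', hx', rfl⟩, hcw | ⟨hwc, hcθ⟩⟩ := ih
      · exact ⟨c, d, hc, hf, ⟨x', hx', rfl⟩, Or.inl hcw⟩
      have hx'' := hx'
      rw [hK] at hx''
      obtain ⟨i, y, hy, rfl⟩ := mem_iUnion.1 hx''
      refine ⟨c * r i, c * a i + d, mul_pos hc (hr i),
        MapsTo.affine_comp hf (mapsTo_of_eq_iUnion hK i), ⟨y, hy, by ring⟩, ?_⟩
      rcases le_or_gt (c * r i) w with hstop | hgo
      · refine Or.inl ⟨?_, hstop⟩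
        calc s * w ≤ s * c := mul_le_mul_of_nonneg_left hwc.le hs
          _ ≤ c * r i := by rw [mul_comm]; exact mul_le_mul_of_nonneg_left (hsr i) hc.le
      · refine Or.inr ⟨hgo, ?_⟩
        rw [pow_succ]
        exact mul_le_mul hcθ (hrθ i) (hr i).le (pow_nonneg ((hr i).le.trans (hrθ i)) n)
  obtain ⟨n, hn⟩ := exists_pow_lt_of_lt_one hw₀ hθ
  obtain ⟨c, d, hc, hf, hx, hcw | ⟨hwc, hcθ⟩⟩ := hdescend n
  · exact ⟨c, d, hc, hf, hx, hcw⟩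
  · exact absurd (hcθ.trans_lt hn) hwc.not_gt

end SelfSimilar

section Ordered

variable {p : ℕ} {r a : Fin p → ℝ} {K : Set ℝ} {A B : ℝ}

theorem apply_zero_eq_of_isLeast [NeZero p] (hK : K = ⋃ i, (fun x => r i * x + a i) '' K)
    (hr : ∀ i, 0 ≤ r i) (hA : IsLeast K A)
    (hord : ∀ i : Fin p, ∀ hi : (i : ℕ) + 1 < p,
      r i * A + a i ≤ r ⟨(i : ℕ) + 1, hi⟩ * A + a ⟨(i : ℕ) + 1, hi⟩) :
    r 0 * A + a 0 = A := by
  obtain ⟨i, hi⟩ := exists_apply_eq_of_isLeast hK hr hA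
  refine le_antisymm ?_ (hA.2 (mapsTo_of_eq_iUnion hK 0 hA.1))
  calc r 0 * A + a 0 ≤ r i * A + a i :=
        Fin.monotone_of_le_add_one (g := fun i => r i * A + a i) hord (Fin.zero_le i)
    _ = A := hi

def intervalGap (r a : Fin p → ℝ) (A B : ℝ) (k : Fin p) (hk : (k : ℕ) + 1 < p) : ℝ :=
  (r ⟨k + 1, hk⟩ * A + a ⟨k + 1, hk⟩) - (r k * B + a k)

theorem exists_mem_Icc_mul_of_gap [NeZero p] (hK : K = ⋃ i, (fun x => r i * x + a i) '' K)
    (hr : ∀ i, 0 ≤ r i) (hA : IsLeast K A) (hB : IsGreatest K B)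
    (hord : ∀ i : Fin p, ∀ hi : (i : ℕ) + 1 < p,
      r i * A + a i ≤ r ⟨(i : ℕ) + 1, hi⟩ * A + a ⟨(i : ℕ) + 1, hi⟩)
    {c d u v : ℝ} (hc : 0 ≤ c) (huv : u ≤ v)
    (hgap : ∀ k hk, c * intervalGap r a A B k hk * u ≤ (c * A + d) * (v - u))
    {t : ℝ} (ht : t ∈ Icc ((c * A + d) * u) ((c * B + d) * v)) :
    ∃ k, t ∈ Icc ((c * (r k * A + a k) + d) * u) ((c * (r k * B + a k) + d) * v) := by
  obtain ⟨j, hj⟩ := exists_apply_eq_of_isGreatest hK hr hB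
  refine exists_mem_Icc_of_chain (lo := fun k => (c * (r k * A + a k) + d) * u)
    (hi := fun k => (c * (r k * B + a k) + d) * v) (fun k hk => ?_) ?_ ⟨j, ?_⟩
  · have hAk : A ≤ r k * B + a k := hA.2 (mapsTo_of_eq_iUnion hK k hB.1)
    have := hgap k hk
    simp only [intervalGap] at this ⊢
    nlinarith [mul_nonneg (mul_nonneg hc (sub_nonneg.2 hAk)) (sub_nonneg.2 huv)]
  · simpa only [apply_zero_eq_of_isLeast hK hr hA hord] using ht.1
  · simpa only [hj] using ht.2

theorem eventually_gap_mul_le {σ x₀ y₀ : ℝ}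
    (h : ∀ k : Fin p, ∀ hk : (k : ℕ) + 1 < p,
      0 < σ * x₀ + ((r k * B + a k) - (r ⟨(k : ℕ) + 1, hk⟩ * A + a ⟨(k : ℕ) + 1, hk⟩)) * y₀) :
    ∀ᶠ z in 𝓝 (x₀, y₀), ∀ k hk, intervalGap r a A B k hk * z.2 ≤ σ * z.1 := by
  refine eventually_all.2 fun k => eventually_all.2 fun hk => ?_
  have hlt : intervalGap r a A B k hk * y₀ < σ * x₀ := by
    have := h k hk
    simp only [intervalGap]
    linarith
  exact ((continuous_const.mul continuous_snd).continuousAt.eventually_lt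
    (continuous_const.mul continuous_fst).continuousAt hlt).mono fun _ hz => hz.le

end Ordered

structure CylinderPair where
  c : ℝ
  d : ℝ
  e : ℝ
  h : ℝ

namespace CylinderPair

def swap (Q : CylinderPair) : CylinderPair := ⟨Q.e, Q.h, Q.c, Q.d⟩

def refineLeft (Q : CylinderPair) (r a : ℝ) : CylinderPair := ⟨Q.c * r, Q.c * a + Q.d, Q.e, Q.h⟩

def prodIcc (A₁ B₁ A₂ B₂ : ℝ) (Q : CylinderPair) : Set ℝ :=
  Icc ((Q.c * A₁ + Q.d) * (Q.e * A₂ + Q.h)) ((Q.c * B₁ + Q.d) * (Q.e * B₂ + Q.h))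

theorem prodIcc_swap (A₁ B₁ A₂ B₂ : ℝ) (Q : CylinderPair) :
    Q.swap.prodIcc A₂ B₂ A₁ B₁ = Q.prodIcc A₁ B₁ A₂ B₂ := by
  simp only [prodIcc, swap, mul_comm]

structure Admissible (K₁ K₂ : Set ℝ) (A₁ B₁ A₂ B₂ s : ℝ) (U : Set (ℝ × ℝ))
    (Q : CylinderPair) : Prop where
  c_pos : 0 < Q.c
  e_pos : 0 < Q.e
  mapsTo₁ : MapsTo (fun x => Q.c * x + Q.d) K₁ K₁
  mapsTo₂ : MapsTo (fun y => Q.e * y + Q.h) K₂ K₂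
  mul_c_le_e : s * Q.c ≤ Q.e
  mul_e_le_c : s * Q.e ≤ Q.c
  box_subset : Icc (Q.c * A₁ + Q.d) (Q.c * B₁ + Q.d) ×ˢ Icc (Q.e * A₂ + Q.h) (Q.e * B₂ + Q.h) ⊆ U

variable {K₁ K₂ : Set ℝ} {A₁ B₁ A₂ B₂ s : ℝ} {U : Set (ℝ × ℝ)} {Q : CylinderPair}

theorem Admissible.swap (hQ : Q.Admissible K₁ K₂ A₁ B₁ A₂ B₂ s U) :
    Q.swap.Admissible K₂ K₁ A₂ B₂ A₁ B₁ s (Prod.swap ⁻¹' U) where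
  c_pos := hQ.e_pos
  e_pos := hQ.c_pos
  mapsTo₁ := hQ.mapsTo₂
  mapsTo₂ := hQ.mapsTo₁
  mul_c_le_e := hQ.mul_e_le_c
  mul_e_le_c := hQ.mul_c_le_e
  box_subset := by
    rw [← preimage_swap_prod]
    exact preimage_mono hQ.box_subset

theorem Admissible.exists_refineLeft {p : ℕ} [NeZero p] {r a : Fin p → ℝ}
    (hK₁ : K₁ = ⋃ i, (fun x => r i * x + a i) '' K₁) (hr : ∀ i, r i ∈ Ioc 0 1)
    (hs : 0 ≤ s) (hsr : ∀ i, s ≤ r i) (hA₁ : IsLeast K₁ A₁) (hB₁ : IsGreatest K₁ B₁)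
    (hA₁₀ : 0 ≤ A₁) (hAB₂ : A₂ ≤ B₂)
    (hord : ∀ i : Fin p, ∀ hi : (i : ℕ) + 1 < p,
      r i * A₁ + a i ≤ r ⟨(i : ℕ) + 1, hi⟩ * A₁ + a ⟨(i : ℕ) + 1, hi⟩)
    (hU : ∀ z ∈ U, ∀ k hk, intervalGap r a A₁ B₁ k hk * z.2 ≤ s * (B₂ - A₂) * z.1)
    (hQ : Q.Admissible K₁ K₂ A₁ B₁ A₂ B₂ s U) (hec : Q.e ≤ Q.c) {t : ℝ}
    (ht : t ∈ Q.prodIcc A₁ B₁ A₂ B₂) :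
    ∃ i, (Q.refineLeft (r i) (a i)).Admissible K₁ K₂ A₁ B₁ A₂ B₂ s U ∧
      t ∈ (Q.refineLeft (r i) (a i)).prodIcc A₁ B₁ A₂ B₂ := by
  obtain ⟨hc, he, hf, hg, hsc, hse, hbox⟩ := hQ
  have hK₁Icc : K₁ ⊆ Icc A₁ B₁ := fun x hx => ⟨hA₁.2 hx, hB₁.2 hx⟩
  have hAB₁ : A₁ ≤ B₁ := hA₁.2 hB₁.1
  have hx₁ : 0 ≤ Q.c * A₁ + Q.d := hA₁₀.trans (hA₁.2 (hf hA₁.1))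
  have huv : Q.e * A₂ + Q.h ≤ Q.e * B₂ + Q.h := by gcongr
  have hcorner : (Q.c * A₁ + Q.d, Q.e * A₂ + Q.h) ∈ U :=
    hbox ⟨left_mem_Icc.2 (by gcongr), left_mem_Icc.2 huv⟩
  have hgap : ∀ k hk, Q.c * intervalGap r a A₁ B₁ k hk * (Q.e * A₂ + Q.h) ≤
      (Q.c * A₁ + Q.d) * ((Q.e * B₂ + Q.h) - (Q.e * A₂ + Q.h)) := by
    intro k hk
    have hmargin := hU _ hcorner k hk
    have hL : 0 ≤ (B₂ - A₂) * (Q.c * A₁ + Q.d) := mul_nonneg (sub_nonneg.2 hAB₂) hx₁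
    calc Q.c * intervalGap r a A₁ B₁ k hk * (Q.e * A₂ + Q.h)
        ≤ Q.c * (s * (B₂ - A₂) * (Q.c * A₁ + Q.d)) := by
          rw [mul_assoc]; exact mul_le_mul_of_nonneg_left hmargin hc.le
      _ = s * Q.c * ((B₂ - A₂) * (Q.c * A₁ + Q.d)) := by ring
      _ ≤ Q.e * ((B₂ - A₂) * (Q.c * A₁ + Q.d)) := mul_le_mul_of_nonneg_right hsc hL
      _ = _ := by ring
  obtain ⟨i, hi⟩ := exists_mem_Icc_mul_of_gap hK₁ (fun i => (hr i).1.le) hA₁ hB₁ hord hc.le huv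
    hgap ht
  have hφ : ∀ x, Q.c * r i * x + (Q.c * a i + Q.d) = Q.c * (r i * x + a i) + Q.d :=
    fun x => by ring
  have hφA := affine_mem_Icc (d := Q.d) hc.le (hK₁Icc (mapsTo_of_eq_iUnion hK₁ i hA₁.1))
  have hφB := affine_mem_Icc (d := Q.d) hc.le (hK₁Icc (mapsTo_of_eq_iUnion hK₁ i hB₁.1))
  refine ⟨i, ⟨mul_pos hc (hr i).1, he,
    MapsTo.affine_comp hf (mapsTo_of_eq_iUnion hK₁ i), hg, ?_, ?_, ?_⟩, ?_⟩
  · calc s * (Q.c * r i) ≤ s * Q.c := by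
          gcongr; exact mul_le_of_le_one_right hc.le (hr i).2
      _ ≤ Q.e := hsc
  · calc s * Q.e ≤ s * Q.c := by gcongr
      _ ≤ Q.c * r i := by rw [mul_comm]; exact mul_le_mul_of_nonneg_left (hsr i) hc.le
  · refine Subset.trans (prod_mono ?_ subset_rfl) hbox
    simp only [refineLeft, hφ]
    exact Icc_subset_Icc hφA.1 hφB.2
  · simpa only [prodIcc, refineLeft, hφ] using hi

/-- The cylinder with the larger ratio is split; as that ratio is at least half of `c + e`, the sum
shrinks by the factor `(1 + θ) / 2`. -/
theorem Admissible.exists_refine {p q : ℕ} [NeZero p] [NeZero q] {r a : Fin p → ℝ}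
    {ρ b : Fin q → ℝ} (hK₁ : K₁ = ⋃ i, (fun x => r i * x + a i) '' K₁)
    (hK₂ : K₂ = ⋃ j, (fun y => ρ j * y + b j) '' K₂)
    (hr : ∀ i, r i ∈ Ioc 0 1) (hρ : ∀ j, ρ j ∈ Ioc 0 1) {θ : ℝ} (hrθ : ∀ i, r i ≤ θ)
    (hρθ : ∀ j, ρ j ≤ θ) (hθ : θ ≤ 1) (hs : 0 ≤ s) (hsr : ∀ i, s ≤ r i) (hsρ : ∀ j, s ≤ ρ j)
    (hA₁ : IsLeast K₁ A₁) (hB₁ : IsGreatest K₁ B₁) (hA₂ : IsLeast K₂ A₂)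
    (hB₂ : IsGreatest K₂ B₂) (hA₁₀ : 0 ≤ A₁) (hA₂₀ : 0 ≤ A₂)
    (hord₁ : ∀ i : Fin p, ∀ hi : (i : ℕ) + 1 < p,
      r i * A₁ + a i ≤ r ⟨(i : ℕ) + 1, hi⟩ * A₁ + a ⟨(i : ℕ) + 1, hi⟩)
    (hord₂ : ∀ j : Fin q, ∀ hj : (j : ℕ) + 1 < q,
      ρ j * A₂ + b j ≤ ρ ⟨(j : ℕ) + 1, hj⟩ * A₂ + b ⟨(j : ℕ) + 1, hj⟩)
    (hU₁ : ∀ z ∈ U, ∀ k hk, intervalGap r a A₁ B₁ k hk * z.2 ≤ s * (B₂ - A₂) * z.1)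
    (hU₂ : ∀ z ∈ U, ∀ k hk, intervalGap ρ b A₂ B₂ k hk * z.1 ≤ s * (B₁ - A₁) * z.2)
    (hQ : Q.Admissible K₁ K₂ A₁ B₁ A₂ B₂ s U) {t : ℝ} (ht : t ∈ Q.prodIcc A₁ B₁ A₂ B₂) :
    ∃ Q' : CylinderPair, Q'.Admissible K₁ K₂ A₁ B₁ A₂ B₂ s U ∧
      t ∈ Q'.prodIcc A₁ B₁ A₂ B₂ ∧ Q'.c + Q'.e ≤ (1 + θ) / 2 * (Q.c + Q.e) := by
  rcases le_total Q.e Q.c with hec | hce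
  · obtain ⟨i, hQ', ht'⟩ := hQ.exists_refineLeft hK₁ hr hs hsr hA₁ hB₁ hA₁₀ (hA₂.2 hB₂.1)
      hord₁ hU₁ hec ht
    refine ⟨_, hQ', ht', ?_⟩
    have : Q.c * r i ≤ Q.c * θ := mul_le_mul_of_nonneg_left (hrθ i) hQ.c_pos.le
    simp only [refineLeft]
    nlinarith [mul_nonneg (sub_nonneg.2 hθ) (sub_nonneg.2 hec)]
  · obtain ⟨j, hQ', ht'⟩ := hQ.swap.exists_refineLeft (U := Prod.swap ⁻¹' U) hK₂ hρ hs hsρ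
      hA₂ hB₂ hA₂₀ (hA₁.2 hB₁.1) hord₂ (fun z hz => hU₂ z.swap hz) hce (by rwa [prodIcc_swap])
    refine ⟨_, by simpa [preimage_preimage] using hQ'.swap, by rwa [prodIcc_swap], ?_⟩
    have : Q.e * ρ j ≤ Q.e * θ := mul_le_mul_of_nonneg_left (hρθ j) hQ.e_pos.le
    simp only [refineLeft, CylinderPair.swap]
    nlinarith [mul_nonneg (sub_nonneg.2 hθ) (sub_nonneg.2 hce)]

theorem Admissible.exists_mul_mem_dist_le (hQ : Q.Admissible K₁ K₂ A₁ B₁ A₂ B₂ s U)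
    (hA₁ : IsLeast K₁ A₁) (hB₁ : IsGreatest K₁ B₁) (hA₂ : IsLeast K₂ A₂)
    (hB₂ : IsGreatest K₂ B₂) (hA₁₀ : 0 ≤ A₁) (hA₂₀ : 0 ≤ A₂) {t : ℝ}
    (ht : t ∈ Q.prodIcc A₁ B₁ A₂ B₂) :
    ∃ w ∈ K₁ * K₂, dist t w ≤ B₁ * B₂ * (Q.c + Q.e) := by
  have hx₁ := hQ.mapsTo₁ hA₁.1
  have hy₁ := hQ.mapsTo₂ hA₂.1
  have hy₂ := hQ.mapsTo₂ hB₂.1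
  refine ⟨_, mul_mem_mul hx₁ hy₁, ?_⟩
  rw [Real.dist_eq, abs_of_nonneg (sub_nonneg.2 ht.1)]
  have hx₁B : Q.c * A₁ + Q.d ≤ B₁ := hB₁.2 hx₁
  have hy₂B : Q.e * B₂ + Q.h ≤ B₂ := hB₂.2 hy₂
  have hx₁₀ : 0 ≤ Q.c * A₁ + Q.d := hA₁₀.trans (hA₁.2 hx₁)
  have hy₂₀ : 0 ≤ Q.e * B₂ + Q.h := hA₂₀.trans (hA₂.2 hy₂)
  have hL₁ : Q.c * (B₁ - A₁) ≤ Q.c * B₁ := by nlinarith [hQ.c_pos]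
  have hL₂ : Q.e * (B₂ - A₂) ≤ Q.e * B₂ := by nlinarith [hQ.e_pos]
  calc t - (Q.c * A₁ + Q.d) * (Q.e * A₂ + Q.h)
      ≤ Q.c * (B₁ - A₁) * (Q.e * B₂ + Q.h) + (Q.c * A₁ + Q.d) * (Q.e * (B₂ - A₂)) := by
        linarith [ht.2]
    _ ≤ Q.c * B₁ * B₂ + B₁ * (Q.e * B₂) := by
        have hB₁₀ : 0 ≤ B₁ := hA₁₀.trans (hA₁.2 hB₁.1)
        have : 0 ≤ Q.e * (B₂ - A₂) := mul_nonneg hQ.e_pos.le (sub_nonneg.2 (hA₂.2 hB₂.1))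
        have : 0 ≤ Q.c * B₁ := mul_nonneg hQ.c_pos.le hB₁₀
        gcongr
    _ = B₁ * B₂ * (Q.c + Q.e) := by ring

theorem Admissible.nonempty_interior_prodIcc (hQ : Q.Admissible K₁ K₂ A₁ B₁ A₂ B₂ s U)
    (hA₁ : IsLeast K₁ A₁) (hA₂ : IsLeast K₂ A₂) (hA₁₀ : 0 ≤ A₁) (hA₂₀ : 0 ≤ A₂)
    (hAB₁ : A₁ < B₁) (hAB₂ : A₂ < B₂) : (interior (Q.prodIcc A₁ B₁ A₂ B₂)).Nonempty := by
  rw [prodIcc, interior_Icc, nonempty_Ioo]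
  have := hQ.c_pos
  have := hQ.e_pos
  exact mul_lt_mul'' (by gcongr) (by gcongr) (hA₁₀.trans (hA₁.2 (hQ.mapsTo₁ hA₁.1)))
    (hA₂₀.trans (hA₂.2 (hQ.mapsTo₂ hA₂.1)))

theorem exists_admissible {ι κ : Type*} {r a : ι → ℝ} {ρ b : κ → ℝ}
    {K₁ K₂ : Set ℝ} {A₁ B₁ A₂ B₂ s θ : ℝ}
    (hK₁ : K₁ = ⋃ i, (fun x => r i * x + a i) '' K₁)
    (hK₂ : K₂ = ⋃ j, (fun y => ρ j * y + b j) '' K₂)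
    (hr : ∀ i, 0 < r i) (hρ : ∀ j, 0 < ρ j) (hrθ : ∀ i, r i ≤ θ) (hρθ : ∀ j, ρ j ≤ θ)
    (hθ : θ < 1) (hs₀ : 0 ≤ s) (hs₁ : s ≤ 1) (hsr : ∀ i, s ≤ r i) (hsρ : ∀ j, s ≤ ρ j)
    (hK₁Icc : K₁ ⊆ Icc A₁ B₁) (hK₂Icc : K₂ ⊆ Icc A₂ B₂) {x₀ y₀ : ℝ} (hx₀ : x₀ ∈ K₁)
    (hy₀ : y₀ ∈ K₂) {ε : ℝ} (hε : 0 < ε) :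
    ∃ Q : CylinderPair, Q.Admissible K₁ K₂ A₁ B₁ A₂ B₂ s (Metric.ball (x₀, y₀) ε) := by
  have hsmall : ∀ L : ℝ, ∀ᶠ w in 𝓝 (0 : ℝ), w * L < ε := fun L =>
    ((continuous_mul_const L).tendsto' 0 0 (zero_mul L)).eventually_lt_const hε
  have hw : ∀ᶠ w in 𝓝[>] (0 : ℝ), 0 < w ∧ w < 1 ∧ w * (B₁ - A₁) < ε ∧ w * (B₂ - A₂) < ε :=
    Eventually.and self_mem_nhdsWithin <| nhdsWithin_le_nhds <|
      (eventually_lt_nhds one_pos).and ((hsmall _).and (hsmall _))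
  obtain ⟨w, hw₀, hw₁, hwL₁, hwL₂⟩ := hw.exists
  obtain ⟨c, d, hc, hf, ⟨x', hx', rfl⟩, -, hcw⟩ :=
    exists_cylinder_ratio_mem_Icc hK₁ hr hs₀ hsr hrθ hθ hx₀ hw₀ hw₁
  obtain ⟨e, h, he, hg, ⟨y', hy', rfl⟩, hse, hec⟩ :=
    exists_cylinder_ratio_mem_Icc hK₂ hρ hs₀ hsρ hρθ hθ hy₀ hc (hcw.trans_lt hw₁)
  have hx'Icc := hK₁Icc hx'
  have hy'Icc := hK₂Icc hy'
  refine ⟨⟨c, d, e, h⟩, hc, he, hf, hg, hse, ?_, ?_⟩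
  · exact (mul_le_of_le_one_left he.le hs₁).trans hec
  · rintro ⟨x, y⟩ ⟨hx, hy⟩
    rw [Metric.mem_ball, Prod.dist_eq, max_lt_iff]
    constructor
    · calc dist x (c * x' + d) ≤ c * (B₁ - A₁) :=
            (Real.dist_le_of_mem_Icc hx (affine_mem_Icc hc.le hx'Icc)).trans_eq (by ring)
        _ ≤ w * (B₁ - A₁) := by gcongr; linarith [hx'Icc.1, hx'Icc.2]
        _ < ε := hwL₁
    · calc dist y (e * y' + h) ≤ e * (B₂ - A₂) :=
            (Real.dist_le_of_mem_Icc hy (affine_mem_Icc he.le hy'Icc)).trans_eq (by ring)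
        _ ≤ w * (B₂ - A₂) := by gcongr; exacts [by linarith [hy'Icc.1, hy'Icc.2], hec.trans hcw]
        _ < ε := hwL₂

end CylinderPair

/-- Corollary: the product set `K₁ · K₂` contains interior under a pointwise condition. -/
theorem product_of_two_self_similar_sets_has_interior
    (p q : ℕ) (hp : 2 ≤ p) (hq : 2 ≤ q)
    (r a : Fin p → ℝ) (ρ b : Fin q → ℝ)
    (hr : ∀ i, r i ∈ Set.Ioo (0 : ℝ) 1) (hρ : ∀ j, ρ j ∈ Set.Ioo (0 : ℝ) 1)
    (K₁ K₂ : Set ℝ)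
    (hK₁ne : K₁.Nonempty) (hK₁c : IsCompact K₁)
    (hK₁ : K₁ = ⋃ i : Fin p, (fun x => r i * x + a i) '' K₁)
    (hK₂ne : K₂.Nonempty) (hK₂c : IsCompact K₂)
    (hK₂ : K₂ = ⋃ j : Fin q, (fun x => ρ j * x + b j) '' K₂)
    (A₁ B₁ A₂ B₂ : ℝ)
    (hA₁ : A₁ = sInf K₁) (hB₁ : B₁ = sSup K₁)
    (hA₂ : A₂ = sInf K₂) (hB₂ : B₂ = sSup K₂)
    (hAB₁ : A₁ < B₁) (hAB₂ : A₂ < B₂)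
    (hA₁0 : 0 ≤ A₁) (hA₂0 : 0 ≤ A₂)
    (hord₁ : ∀ i : Fin p, ∀ hi : (i : ℕ) + 1 < p,
      r i * A₁ + a i ≤ r ⟨(i : ℕ) + 1, hi⟩ * A₁ + a ⟨(i : ℕ) + 1, hi⟩)
    (hord₂ : ∀ j : Fin q, ∀ hj : (j : ℕ) + 1 < q,
      ρ j * A₂ + b j ≤ ρ ⟨(j : ℕ) + 1, hj⟩ * A₂ + b ⟨(j : ℕ) + 1, hj⟩)
    (smin : ℝ)
    (hsmin_le₁ : ∀ i, smin ≤ r i) (hsmin_le₂ : ∀ j, smin ≤ ρ j)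
    (hsmin_mem : (∃ i, smin = r i) ∨ (∃ j, smin = ρ j))
    (x₀ y₀ : ℝ) (hx₀ : x₀ ∈ K₁) (hy₀ : y₀ ∈ K₂)
    (hcond₁ : ∀ i : Fin p, ∀ hi : (i : ℕ) + 1 < p,
      0 < smin * (B₂ - A₂) * x₀
          + ((r i * B₁ + a i) - (r ⟨(i : ℕ) + 1, hi⟩ * A₁ + a ⟨(i : ℕ) + 1, hi⟩)) * y₀)
    (hcond₂ : ∀ j : Fin q, ∀ hj : (j : ℕ) + 1 < q,
      0 < smin * (B₁ - A₁) * y₀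
          + ((ρ j * B₂ + b j) - (ρ ⟨(j : ℕ) + 1, hj⟩ * A₂ + b ⟨(j : ℕ) + 1, hj⟩)) * x₀) :
    (interior {w : ℝ | ∃ x ∈ K₁, ∃ y ∈ K₂, x * y = w}).Nonempty := by
  have : NeZero p := ⟨by omega⟩
  have : NeZero q := ⟨by omega⟩
  have hleast₁ : IsLeast K₁ A₁ := hA₁ ▸ hK₁c.isLeast_sInf hK₁ne
  have hgreatest₁ : IsGreatest K₁ B₁ := hB₁ ▸ hK₁c.isGreatest_sSup hK₁ne
  have hleast₂ : IsLeast K₂ A₂ := hA₂ ▸ hK₂c.isLeast_sInf hK₂ne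
  have hgreatest₂ : IsGreatest K₂ B₂ := hB₂ ▸ hK₂c.isGreatest_sSup hK₂ne
  have hs₀ : 0 < smin := by rcases hsmin_mem with ⟨i, rfl⟩ | ⟨j, rfl⟩; exacts [(hr i).1, (hρ j).1]
  obtain ⟨θ, hθ, hrθ, hρθ⟩ : ∃ θ < 1, (∀ i, r i ≤ θ) ∧ ∀ j, ρ j ≤ θ := by
    obtain ⟨i, hi⟩ := Finite.exists_max r
    obtain ⟨j, hj⟩ := Finite.exists_max ρ
    exact ⟨max (r i) (ρ j), max_lt (hr i).2 (hρ j).2, fun i' => (hi i').trans (le_max_left _ _),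
      fun j' => (hj j').trans (le_max_right _ _)⟩
  obtain ⟨ε, hε, hU⟩ := Metric.eventually_nhds_iff_ball.1 ((eventually_gap_mul_le hcond₁).and
    ((continuous_swap.tendsto (x₀, y₀)).eventually (eventually_gap_mul_le hcond₂)))
  obtain ⟨Q, hQ⟩ := CylinderPair.exists_admissible hK₁ hK₂ (fun i => (hr i).1)
    (fun j => (hρ j).1) hrθ hρθ hθ hs₀.le ((hsmin_le₁ 0).trans (hr 0).2.le) hsmin_le₁ hsmin_le₂
    (fun x hx => ⟨hleast₁.2 hx, hgreatest₁.2 hx⟩) (fun y hy => ⟨hleast₂.2 hy, hgreatest₂.2 hy⟩)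
    hx₀ hy₀ hε
  have hsub : Q.prodIcc A₁ B₁ A₂ B₂ ⊆ K₁ * K₂ :=
    (hK₁c.mul hK₂c).isClosed.subset_of_refine (θ := (1 + θ) / 2) (C := B₁ * B₂)
      (by linarith [(hr 0).1, hrθ 0]) (by linarith)
      (mul_nonneg (hA₁0.trans hAB₁.le) (hA₂0.trans hAB₂.le))
      (fun Q hQ t ht => hQ.exists_refine hK₁ hK₂ (fun i => Ioo_subset_Ioc_self (hr i))
        (fun j => Ioo_subset_Ioc_self (hρ j)) hrθ hρθ hθ.le hs₀.le hsmin_le₁ hsmin_le₂ hleast₁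
        hgreatest₁ hleast₂ hgreatest₂ hA₁0 hA₂0 hord₁ hord₂ (fun z hz => (hU z hz).1)
        (fun z hz => (hU z hz).2) ht)
      (fun Q hQ t ht =>
        hQ.exists_mul_mem_dist_le hleast₁ hgreatest₁ hleast₂ hgreatest₂ hA₁0 hA₂0 ht)
      hQ
  exact (hQ.nonempty_interior_prodIcc hleast₁ hleast₂ hA₁0 hA₂0 hAB₁ hAB₂).mono (interior_mono hsub)
end

section
/- Let C be the middle-third Cantor set. Then {1/x₁ + 1/x₂ + 1/x₃ + 1/x₄ : x₁, x₂, x₃ ∈ C ∩ [2/9, 1/3], x₄ ∈ C ∩ [2/3, 1]} = [10, 15]. -/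
/-!
Write each `xᵢ` as the left end `aᵢ` of an interval `[aᵢ, aᵢ + hᵢ]` carrying an affine copy of
the Cantor set, so that `∑ 1 / xᵢ` ranges over `[∑ 1 / (aᵢ + hᵢ), ∑ 1 / aᵢ]`, an interval whose
length is the sum of the widths `1 / aᵢ - 1 / (aᵢ + hᵢ)`. Splitting the widest coordinate into its
outer thirds replaces this interval by two subintervals; they overlap as long as the widths stay
within a factor 4 of each other, because the gap left by the middle third (at most half the widest
width when `2 hᵢ ≤ aᵢ`) is then covered by the other three widths. Splitting also keeps the widths
balanced and shrinks their total by a fixed factor, so every `y ∈ [10, 15]` lies in a nested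
sequence of such intervals and is attained at their common point, by compactness.
-/

open Set

lemma div_three_mem_cantorSet {t : ℝ} (ht : t ∈ cantorSet) : t / 3 ∈ cantorSet := by
  rw [cantorSet_eq_union_halves]
  exact Or.inl ⟨t, ht, rfl⟩

lemma two_add_div_three_mem_cantorSet {t : ℝ} (ht : t ∈ cantorSet) :
    (2 + t) / 3 ∈ cantorSet := by
  rw [cantorSet_eq_union_halves]
  exact Or.inr ⟨t, ht, rfl⟩

def IsCantorPiece (K : Set ℝ) (a h : ℝ) : Prop :=
  ∀ t ∈ cantorSet, a + h * t ∈ K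

lemma isCantorPiece_cantorSet_zero_one : IsCantorPiece cantorSet 0 1 := by
  intro t ht
  simpa using ht

namespace IsCantorPiece

variable {K : Set ℝ} {a h : ℝ}

lemma left_mem (hp : IsCantorPiece K a h) : a ∈ K := by
  simpa using hp 0 zero_mem_cantorSet

lemma left_third (hp : IsCantorPiece K a h) : IsCantorPiece K a (h / 3) := by
  intro t ht
  convert hp _ (div_three_mem_cantorSet ht) using 2
  ring

lemma right_third (hp : IsCantorPiece K a h) : IsCantorPiece K (a + 2 * h / 3) (h / 3) := by
  intro t ht
  convert hp _ (two_add_div_three_mem_cantorSet ht) using 1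
  ring

lemma inter_Icc (hp : IsCantorPiece K a h) (hh : 0 ≤ h) :
    IsCantorPiece (K ∩ Icc a (a + h)) a h := by
  intro t ht
  obtain ⟨ht₀, ht₁⟩ := cantorSet_subset_unitInterval ht
  exact ⟨hp t ht, by nlinarith, by nlinarith⟩

end IsCantorPiece

noncomputable def recipWidth (a h : ℝ) : ℝ := 1 / a - 1 / (a + h)

section recipWidth

variable {a h : ℝ}

lemma recipWidth_nonneg (ha : 0 < a) (hh : 0 ≤ h) : 0 ≤ recipWidth a h :=
  sub_nonneg.2 (one_div_le_one_div_of_le ha (le_add_of_nonneg_right hh))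

lemma recipWidth_eq_div (ha : 0 < a) (hh : 0 ≤ h) : recipWidth a h = h / (a * (a + h)) := by
  have : 0 < a + h := by linarith
  rw [recipWidth]
  field_simp
  ring

lemma recipWidth_eq_add_thirds (a h : ℝ) :
    recipWidth a h = recipWidth a (h / 3) + recipWidth (a + h / 3) (h / 3) +
      recipWidth (a + 2 * h / 3) (h / 3) := by
  simp only [recipWidth]
  rw [show a + h / 3 + h / 3 = a + 2 * h / 3 by ring, show a + 2 * h / 3 + h / 3 = a + h by ring]
  ring

lemma recipWidth_div_four_le_left (ha : 0 < a) (hh : 0 < h) :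
    recipWidth a h / 4 ≤ recipWidth a (h / 3) := by
  rw [recipWidth_eq_div ha hh.le, recipWidth_eq_div ha (by positivity),
    div_div, div_le_div_iff₀ (by positivity) (by positivity)]
  nlinarith [mul_pos (mul_pos ha hh) hh, mul_pos (mul_pos ha hh) ha]

lemma recipWidth_div_four_le_right (hh : 0 < h) (ha : 2 * h ≤ a) :
    recipWidth a h / 4 ≤ recipWidth (a + 2 * h / 3) (h / 3) := by
  have ha₀ : 0 < a := by linarith
  rw [recipWidth_eq_div ha₀ hh.le, recipWidth_eq_div (by positivity) (by positivity),
    div_div, div_le_div_iff₀ (by positivity) (by positivity)]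
  nlinarith [mul_nonneg (mul_pos hh (by linarith : 0 < a + h)).le (by linarith : 0 ≤ a - 2 * h)]

lemma recipWidth_middle_le_half (ha : 0 < a) (hh : 0 < h) :
    recipWidth (a + h / 3) (h / 3) ≤ recipWidth a h / 2 := by
  rw [recipWidth_eq_div ha hh.le, recipWidth_eq_div (by positivity) (by positivity)]
  field_simp
  nlinarith [mul_pos (mul_pos ha hh) hh, mul_pos (mul_pos hh hh) hh, mul_pos (mul_pos ha hh) ha]

lemma two_ninths_mul_recipWidth_le_middle (hh : 0 < h) (ha : 2 * h ≤ a) :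
    2 / 9 * recipWidth a h ≤ recipWidth (a + h / 3) (h / 3) := by
  have ha₀ : 0 < a := by linarith
  rw [recipWidth_eq_div ha₀ hh.le, recipWidth_eq_div (by positivity) (by positivity),
    mul_div_assoc', div_le_div_iff₀ (by positivity) (by positivity)]
  nlinarith [mul_pos (mul_pos ha₀ hh) hh, mul_pos (mul_pos hh hh) hh, mul_pos (mul_pos ha₀ hh) ha₀,
    mul_nonneg (mul_pos hh hh).le (by linarith : 0 ≤ a - 2 * h)]

end recipWidth

lemma sum_update₂_eq {ι : Type*} [Fintype ι] [DecidableEq ι] (f : ℝ → ℝ → ℝ) (a h : ι → ℝ)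
    (i : ι) (c d : ℝ) :
    ∑ j, f (Function.update a i c j) (Function.update h i d j) =
      ∑ j, f (a j) (h j) - f (a i) (h i) + f c d := by
  simp_rw [Function.apply_update₂ (fun _ => f), Finset.sum_update_of_mem (Finset.mem_univ i),
    ← Finset.add_sum_erase _ _ (Finset.mem_univ i), Finset.sdiff_singleton_eq_erase]
  ring

lemma sum_recipWidth {ι : Type*} [Fintype ι] (a h : ι → ℝ) :
    ∑ i, recipWidth (a i) (h i) = ∑ i, 1 / a i - ∑ i, 1 / (a i + h i) :=
  Finset.sum_sub_distrib _ _

lemma one_sub_two_div_nine_mul_mem_Ico {n : ℕ} (hn : 0 < n) : 1 - 2 / (9 * n : ℝ) ∈ Ico 0 1 := by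
  have : (1 : ℝ) ≤ n := by exact_mod_cast hn
  constructor
  · rw [sub_nonneg, div_le_one (by positivity)]
    linarith
  · linarith [show 0 < 2 / (9 * n : ℝ) by positivity]

structure IsBalancedBox {ι : Type*} (K : ι → Set ℝ) (a h : ι → ℝ) : Prop where
  piece : ∀ i, IsCantorPiece (K i) (a i) (h i)
  pos : ∀ i, 0 < h i
  two_mul_le : ∀ i, 2 * h i ≤ a i
  balanced : ∀ j k, recipWidth (a k) (h k) ≤ 4 * recipWidth (a j) (h j)

namespace IsBalancedBox

variable {ι : Type*} {K : ι → Set ℝ} {a h : ι → ℝ}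

lemma left_pos (hB : IsBalancedBox K a h) (i : ι) : 0 < a i := by
  linarith [hB.pos i, hB.two_mul_le i]

lemma recipWidth_nonneg (hB : IsBalancedBox K a h) (i : ι) : 0 ≤ recipWidth (a i) (h i) :=
  _root_.recipWidth_nonneg (hB.left_pos i) (hB.pos i).le

lemma inter_Icc (hB : IsBalancedBox K a h) :
    IsBalancedBox (fun i => K i ∩ Icc (a i) (a i + h i)) a h where
  piece i := (hB.piece i).inter_Icc (hB.pos i).le
  pos := hB.pos
  two_mul_le := hB.two_mul_le
  balanced := hB.balanced

lemma update [DecidableEq ι] (hB : IsBalancedBox K a h) {i : ι}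
    (hmax : ∀ j, recipWidth (a j) (h j) ≤ recipWidth (a i) (h i)) {c d : ℝ}
    (hp : IsCantorPiece (K i) c d) (hd : 0 < d) (hc : 2 * d ≤ c)
    (hge : recipWidth (a i) (h i) / 4 ≤ recipWidth c d)
    (hle : recipWidth c d ≤ recipWidth (a i) (h i)) :
    IsBalancedBox K (Function.update a i c) (Function.update h i d) := by
  have hupper : ∀ k, recipWidth (Function.update a i c k) (Function.update h i d k) ≤
      recipWidth (a i) (h i) := by
    intro k
    rcases eq_or_ne k i with rfl | hk
    · simpa using hle
    · simpa [hk] using hmax k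
  have hlower : ∀ j, recipWidth (a i) (h i) / 4 ≤
      recipWidth (Function.update a i c j) (Function.update h i d j) := by
    intro j
    rcases eq_or_ne j i with rfl | hj
    · simpa using hge
    · rw [Function.update_of_ne hj, Function.update_of_ne hj]
      linarith [hB.balanced j i]
  refine ⟨fun j => ?_, fun j => ?_, fun j => ?_, fun j k => by linarith [hupper k, hlower j]⟩ <;>
    rcases eq_or_ne j i with rfl | hj <;> simp [*, hB.piece j, hB.pos j, hB.two_mul_le j]

section Fintype

variable [Fintype ι] {y : ℝ}

lemma recipWidth_middle_le_sum_sub (hn : 3 ≤ Fintype.card ι) (hB : IsBalancedBox K a h) (i : ι) :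
    recipWidth (a i + h i / 3) (h i / 3) ≤
      ∑ j, recipWidth (a j) (h j) - recipWidth (a i) (h i) := by
  classical
  set L := recipWidth (a i) (h i)
  have hsum : L + ∑ j ∈ Finset.univ.erase i, recipWidth (a j) (h j) = ∑ j, recipWidth (a j) (h j) :=
    Finset.add_sum_erase _ (fun j => recipWidth (a j) (h j)) (Finset.mem_univ i)
  have hrest := Finset.card_nsmul_le_sum (Finset.univ.erase i) (fun j => recipWidth (a j) (h j))
    (L / 4) fun j _ => by linarith [hB.balanced j i]
  rw [Finset.card_erase_of_mem (Finset.mem_univ i), Finset.card_univ, nsmul_eq_mul,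
    Nat.cast_sub (by omega), Nat.cast_one] at hrest
  have hn' : (3 : ℝ) ≤ Fintype.card ι := by exact_mod_cast hn
  have hL := hB.recipWidth_nonneg i
  have := recipWidth_middle_le_half (hB.left_pos i) (hB.pos i)
  nlinarith

/-- The factor `1 - 2 / (9 n)`: the removed middle third has at least `2 / 9` of the width of the
widest coordinate, which is at least `1 / n` of the total width. -/
lemma update_third [DecidableEq ι] (hB : IsBalancedBox K a h) {i : ι}
    (hmax : ∀ j, recipWidth (a j) (h j) ≤ recipWidth (a i) (h i)) {c : ℝ}
    (hp : IsCantorPiece (K i) c (h i / 3)) (hc : a i ≤ c)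
    (hge : recipWidth (a i) (h i) / 4 ≤ recipWidth c (h i / 3))
    (hle : recipWidth c (h i / 3) + recipWidth (a i + h i / 3) (h i / 3) ≤ recipWidth (a i) (h i)) :
    IsBalancedBox K (Function.update a i c) (Function.update h i (h i / 3)) ∧
      ∑ j, recipWidth (Function.update a i c j) (Function.update h i (h i / 3) j) ≤
        (1 - 2 / (9 * Fintype.card ι)) * ∑ j, recipWidth (a j) (h j) := by
  have hpos := hB.pos i
  have hmid₀ := _root_.recipWidth_nonneg (by linarith [hB.left_pos i] : 0 < a i + h i / 3)
    (by positivity : 0 ≤ h i / 3)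
  refine ⟨hB.update hmax hp (by positivity) (by linarith [hB.two_mul_le i]) hge (by linarith), ?_⟩
  have hmid := two_ninths_mul_recipWidth_le_middle hpos (hB.two_mul_le i)
  have hwidest : ∑ j, recipWidth (a j) (h j) ≤ Fintype.card ι * recipWidth (a i) (h i) := by
    simpa using Finset.sum_le_sum fun j (_ : j ∈ Finset.univ) => hmax j
  have hshrink : 2 / (9 * Fintype.card ι) * ∑ j, recipWidth (a j) (h j) ≤
      2 / 9 * recipWidth (a i) (h i) := by
    have hcard : (0 : ℝ) < Fintype.card ι := by exact_mod_cast Fintype.card_pos_iff.2 ⟨i⟩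
    rw [div_mul_eq_mul_div, div_le_iff₀ (by positivity)]
    nlinarith
  rw [sum_update₂_eq]
  linarith

lemma exists_split (hn : 3 ≤ Fintype.card ι) (hB : IsBalancedBox K a h)
    (hy : y ∈ Icc (∑ i, 1 / (a i + h i)) (∑ i, 1 / a i)) :
    ∃ a' h' : ι → ℝ, IsBalancedBox K a' h' ∧ y ∈ Icc (∑ i, 1 / (a' i + h' i)) (∑ i, 1 / a' i) ∧
      ∑ i, recipWidth (a' i) (h' i) ≤
        (1 - 2 / (9 * Fintype.card ι)) * ∑ i, recipWidth (a i) (h i) := by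
  classical
  have : Nonempty ι := Fintype.card_pos_iff.mp (by omega)
  obtain ⟨i, hmax⟩ := Finite.exists_max fun j => recipWidth (a j) (h j)
  have hpos := hB.pos i
  have ha := hB.left_pos i
  have hthirds := recipWidth_eq_add_thirds (a i) (h i)
  have hleft₀ := _root_.recipWidth_nonneg ha (by positivity : 0 ≤ h i / 3)
  have hright₀ := _root_.recipWidth_nonneg (by linarith : 0 < a i + 2 * h i / 3)
    (by positivity : 0 ≤ h i / 3)
  have hlo := sum_update₂_eq (fun x y => 1 / (x + y)) a h i
  have hhi : ∀ c, ∑ j, 1 / Function.update a i c j = ∑ j, 1 / a j - 1 / a i + 1 / c :=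
    fun c => sum_update₂_eq (fun x _ => 1 / x) a h i c 0
  by_cases hyl : ∑ j, 1 / (a j + h j) - 1 / (a i + h i) + 1 / (a i + h i / 3) ≤ y
  · obtain ⟨hB', hW'⟩ := hB.update_third hmax (hB.piece i).left_third le_rfl
      (recipWidth_div_four_le_left ha hpos) (by linarith)
    refine ⟨_, _, hB', ⟨?_, ?_⟩, hW'⟩
    · rwa [hlo]
    · rw [hhi]
      linarith [hy.2]
  · obtain ⟨hB', hW'⟩ := hB.update_third hmax (hB.piece i).right_third (by linarith)
      (recipWidth_div_four_le_right hpos (hB.two_mul_le i)) (by linarith)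
    refine ⟨_, _, hB', ⟨?_, ?_⟩, hW'⟩
    · rw [hlo, show a i + 2 * h i / 3 + h i / 3 = a i + h i by ring]
      linarith [hy.1]
    · have hgap := recipWidth_middle_le_sum_sub hn hB i
      rw [sum_recipWidth] at hgap
      simp only [recipWidth, show a i + h i / 3 + h i / 3 = a i + 2 * h i / 3 by ring] at hgap
      rw [hhi]
      linarith

lemma exists_sum_recipWidth_le (hn : 3 ≤ Fintype.card ι) (hB : IsBalancedBox K a h)
    (hy : y ∈ Icc (∑ i, 1 / (a i + h i)) (∑ i, 1 / a i)) (k : ℕ) :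
    ∃ a' h' : ι → ℝ, IsBalancedBox K a' h' ∧ y ∈ Icc (∑ i, 1 / (a' i + h' i)) (∑ i, 1 / a' i) ∧
      ∑ i, recipWidth (a' i) (h' i) ≤
        (1 - 2 / (9 * Fintype.card ι)) ^ k * ∑ i, recipWidth (a i) (h i) := by
  induction k with
  | zero => exact ⟨a, h, hB, hy, by simp⟩
  | succ k ih =>
    obtain ⟨a', h', hB', hy', hW'⟩ := ih
    obtain ⟨a'', h'', hB'', hy'', hW''⟩ := hB'.exists_split hn hy'
    refine ⟨a'', h'', hB'', hy'', hW''.trans ?_⟩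
    rw [pow_succ', mul_assoc]
    exact mul_le_mul_of_nonneg_left hW' (one_sub_two_div_nine_mul_mem_Ico (by omega)).1

theorem exists_sum_one_div_eq (hK : ∀ i, IsClosed (K i)) (hn : 3 ≤ Fintype.card ι)
    (hB : IsBalancedBox K a h) (hy : y ∈ Icc (∑ i, 1 / (a i + h i)) (∑ i, 1 / a i)) :
    ∃ x : ι → ℝ, (∀ i, x i ∈ K i ∩ Icc (a i) (a i + h i)) ∧ ∑ i, 1 / x i = y := by
  set S := univ.pi fun i => K i ∩ Icc (a i) (a i + h i)
  have hS : IsCompact S := isCompact_univ_pi fun i => isCompact_Icc.inter_left (hK i)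
  have hf : ContinuousOn (fun x : ι → ℝ => ∑ i, 1 / x i) S := by
    refine continuousOn_finsetSum _ fun i _ =>
      continuousOn_const.div (continuous_apply i).continuousOn fun x hx => ?_
    exact (hB.left_pos i).trans_le (hx i (mem_univ i)).2.1 |>.ne'
  suffices y ∈ closure ((fun x : ι → ℝ => ∑ i, 1 / x i) '' S) by
    rw [(hS.image_of_continuousOn hf).isClosed.closure_eq] at this
    obtain ⟨x, hx, rfl⟩ := this
    exact ⟨x, fun i => hx i (mem_univ i), rfl⟩
  rw [Metric.mem_closure_iff]
  intro ε hε
  obtain ⟨hr₀, hr₁⟩ := one_sub_two_div_nine_mul_mem_Ico (n := Fintype.card ι) (by omega)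
  have hlim := (tendsto_pow_atTop_nhds_zero_of_lt_one hr₀ hr₁).mul_const
    (∑ i, recipWidth (a i) (h i))
  rw [zero_mul] at hlim
  obtain ⟨k, hk⟩ := (hlim.eventually (gt_mem_nhds hε)).exists
  obtain ⟨a', h', hB', hy', hW'⟩ := hB.inter_Icc.exists_sum_recipWidth_le hn hy k
  refine ⟨_, ⟨a', fun i _ => (hB'.piece i).left_mem, rfl⟩, ?_⟩
  rw [Real.dist_eq, abs_sub_comm, abs_of_nonneg (by linarith [hy'.2])]
  linarith [hy'.1, sum_recipWidth a' h']

end Fintype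

end IsBalancedBox

lemma one_div_mem_Icc {p q x : ℝ} (hp : 0 < p) (hx : x ∈ Icc p q) : 1 / x ∈ Icc (1 / q) (1 / p) :=
  ⟨one_div_le_one_div_of_le (hp.trans_le hx.1) hx.2, one_div_le_one_div_of_le hp hx.1⟩

lemma isBalancedBox_cantorSet_ninths_thirds :
    IsBalancedBox (fun _ : Fin 4 => cantorSet)
      ![2 / 9, 2 / 9, 2 / 9, 2 / 3] ![1 / 9, 1 / 9, 1 / 9, 1 / 3] := by
  have h₉ : IsCantorPiece cantorSet (2 / 9) (1 / 9) := by
    convert isCantorPiece_cantorSet_zero_one.left_third.right_third using 1 <;> norm_num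
  have h₃ : IsCantorPiece cantorSet (2 / 3) (1 / 3) := by
    convert isCantorPiece_cantorSet_zero_one.right_third using 1; norm_num
  refine ⟨fun i => ?_, fun i => ?_, fun i => ?_, fun j k => ?_⟩
  · fin_cases i <;> assumption
  · fin_cases i <;> norm_num
  · fin_cases i <;> norm_num
  · fin_cases j <;> fin_cases k <;> norm_num [recipWidth]

theorem four_reciprocals_cantorSet_mixed_eq_Icc_ten_fifteen :
    {y : ℝ | ∃ x₁ ∈ cantorSet ∩ Set.Icc (2 / 9 : ℝ) (1 / 3),
        ∃ x₂ ∈ cantorSet ∩ Set.Icc (2 / 9 : ℝ) (1 / 3),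
        ∃ x₃ ∈ cantorSet ∩ Set.Icc (2 / 9 : ℝ) (1 / 3),
        ∃ x₄ ∈ cantorSet ∩ Set.Icc (2 / 3 : ℝ) 1,
        y = 1 / x₁ + 1 / x₂ + 1 / x₃ + 1 / x₄}
      = Set.Icc (10 : ℝ) 15 := by
  ext y
  constructor
  · rintro ⟨x₁, ⟨-, h₁⟩, x₂, ⟨-, h₂⟩, x₃, ⟨-, h₃⟩, x₄, ⟨-, h₄⟩, rfl⟩
    have b₁ := one_div_mem_Icc (by norm_num) h₁
    have b₂ := one_div_mem_Icc (by norm_num) h₂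
    have b₃ := one_div_mem_Icc (by norm_num) h₃
    have b₄ := one_div_mem_Icc (by norm_num) h₄
    norm_num at b₁ b₂ b₃ b₄ ⊢
    constructor <;> linarith [b₁.1, b₁.2, b₂.1, b₂.2, b₃.1, b₃.2, b₄.1, b₄.2]
  · intro hy
    obtain ⟨x, hx, rfl⟩ := isBalancedBox_cantorSet_ninths_thirds.exists_sum_one_div_eq
      (fun _ => isClosed_cantorSet) (by simp)
      (by convert hy using 2 <;> simp [Fin.sum_univ_four, Matrix.cons_val] <;> norm_num)
    have h₁ := hx 0
    have h₂ := hx 1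
    have h₃ := hx 2
    have h₄ := hx 3
    simp only [Matrix.cons_val] at h₁ h₂ h₃ h₄
    norm_num at h₁ h₂ h₃ h₄
    exact ⟨x 0, h₁, x 1, h₂, x 2, h₃, x 3, h₄, Fin.sum_univ_four _⟩
end
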